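/- arXiv:0908.2925 — 5 statements merged into one kernel-verified Lean document; each statement's English description precedes it below -/
import Mathlib

section
/- Let V be a 2g-dimensional vector space over 𝔽₂ equipped with a nondegenerate alternating bilinear form B, and let q be a quadratic refinement of B. Then the sum over all x ∈ V of (−1)^{q(x)} (as an integer) equals either 2^g or −2^g; equivalently, its square equals 4^g = |V|. -/
/-- A quadratic refinement of a bilinear form `B` over `𝔽₂ = ZMod 2` is a function
`q : V → ZMod 2` satisfying `q (x + y) = q x + q y + B x y`. -/
def IsQuadraticRefinement {V : Type*} [AddCommGroup V] [Module (ZMod 2) V]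
    (B : V →ₗ[ZMod 2] V →ₗ[ZMod 2] ZMod 2) (q : V → ZMod 2) : Prop :=
  ∀ x y : V, q (x + y) = q x + q y + B x y

/-- **Arf's fact, sign-sum form**: on a `2g`-dimensional `𝔽₂`-vector space with a
nondegenerate alternating bilinear form, `Σ_{x∈V} (−1)^{q(x)} = ±2^g`; equivalently,
its square is `4^g = |V|`. -/
theorem arf_sign_sum {V : Type*} [AddCommGroup V] [Module (ZMod 2) V] [Fintype V]
    (g : ℕ) (hdim : Module.finrank (ZMod 2) V = 2 * g)
    (B : V →ₗ[ZMod 2] V →ₗ[ZMod 2] ZMod 2)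
    (halt : ∀ x : V, B x x = 0)
    (hnd : ∀ z : V, z ≠ 0 → ∃ x : V, B z x ≠ 0)
    (q : V → ZMod 2) (hq : IsQuadraticRefinement B q) :
    (∑ x : V, (-1 : ℤ) ^ (q x).val = 2 ^ g ∨
      ∑ x : V, (-1 : ℤ) ^ (q x).val = -(2 ^ g)) ∧
    (∑ x : V, (-1 : ℤ) ^ (q x).val) ^ 2 = 4 ^ g ∧
    (4 : ℤ) ^ g = Fintype.card V := by
  -- basic character facts
  have hchi3 : ∀ a b c : ZMod 2,
      (-1 : ℤ) ^ a.val * (-1) ^ ((a + b + c).val) = (-1) ^ b.val * (-1) ^ c.val := by decide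
  have hchi1 : ∀ a : ZMod 2, (-1 : ℤ) ^ ((a + 1).val) = -(-1) ^ a.val := by decide
  -- q 0 = 0
  have hq0 : q 0 = 0 := by
    have h := hq 0 0
    simp only [add_zero, map_zero, LinearMap.zero_apply] at h
    rw [CharTwo.add_self_eq_zero] at h
    exact h
  -- symmetry of B
  have hsymm : ∀ x y : V, B x y = B y x := by
    intro x y
    have h := halt (x + y)
    simp only [map_add, LinearMap.add_apply, halt] at h
    have h' : B x y + B y x = 0 := by
      have := halt x; have := halt y; linear_combination h
    have := eq_neg_of_add_eq_zero_left h'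
    simpa [CharTwo.neg_eq] using this
  -- inner sum vanishes for nonzero z
  have hzero : ∀ z : V, z ≠ 0 → ∑ x : V, (-1 : ℤ) ^ ((B x z).val) = 0 := by
    intro z hz
    obtain ⟨x0, hx0⟩ := hnd z hz
    have hx0' : B x0 z = 1 := by
      rw [hsymm]
      revert hx0
      generalize B z x0 = a
      revert a
      decide
    have key : ∑ x : V, (-1 : ℤ) ^ ((B x z).val)
        = ∑ x : V, (-1 : ℤ) ^ ((B (x + x0) z).val) :=
      (Fintype.sum_equiv (Equiv.addRight x0)
        (fun x => (-1 : ℤ) ^ ((B (x + x0) z).val))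
        (fun x => (-1 : ℤ) ^ ((B x z).val)) (fun x => rfl)).symm
    have key2 : ∀ x : V, (-1 : ℤ) ^ ((B (x + x0) z).val) = -(-1 : ℤ) ^ ((B x z).val) := by
      intro x
      rw [map_add, LinearMap.add_apply, hx0']
      exact hchi1 _
    rw [Finset.sum_congr rfl (fun x _ => key2 x), Finset.sum_neg_distrib] at key
    linarith
  -- the square of the sum equals the cardinality
  have hS2 : (∑ x : V, (-1 : ℤ) ^ (q x).val) * (∑ x : V, (-1 : ℤ) ^ (q x).val)
      = (Fintype.card V : ℤ) := by
    rw [Finset.sum_mul_sum]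
    have step1 : ∀ x : V,
        ∑ y : V, (-1 : ℤ) ^ (q x).val * (-1) ^ (q y).val
          = ∑ z : V, (-1 : ℤ) ^ (q z).val * (-1) ^ ((B x z).val) := by
      intro x
      refine (Fintype.sum_equiv (Equiv.addLeft x) _ _ (fun z => ?_)).symm
      show (-1 : ℤ) ^ (q z).val * (-1) ^ ((B x z).val)
          = (-1 : ℤ) ^ (q x).val * (-1) ^ (q (x + z)).val
      rw [hq x z]
      exact (hchi3 (q x) (q z) (B x z)).symm
    calc ∑ x : V, ∑ y : V, (-1 : ℤ) ^ (q x).val * (-1) ^ (q y).val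
        = ∑ x : V, ∑ z : V, (-1 : ℤ) ^ (q z).val * (-1) ^ ((B x z).val) :=
          Finset.sum_congr rfl (fun x _ => step1 x)
      _ = ∑ z : V, ∑ x : V, (-1 : ℤ) ^ (q z).val * (-1) ^ ((B x z).val) :=
          Finset.sum_comm
      _ = ∑ z : V, (-1 : ℤ) ^ (q z).val * ∑ x : V, (-1 : ℤ) ^ ((B x z).val) := by
          simp [Finset.mul_sum]
      _ = (Fintype.card V : ℤ) := by
          rw [Finset.sum_eq_single_of_mem 0 (Finset.mem_univ 0)]
          · simp [hq0, Finset.card_univ]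
          · intro z _ hz
            rw [hzero z hz, mul_zero]
  have hcard : (Fintype.card V : ℤ) = 4 ^ g := by
    have := Module.card_eq_pow_finrank (K := ZMod 2) (V := V)
    rw [hdim] at this
    simp only [ZMod.card] at this
    rw [this]
    push_cast
    rw [pow_mul]
    norm_num
  refine ⟨?_, ?_, hcard.symm⟩
  · have h : (∑ x : V, (-1 : ℤ) ^ (q x).val) * (∑ x : V, (-1 : ℤ) ^ (q x).val)
        = (2 ^ g : ℤ) * (2 ^ g : ℤ) := by
      rw [hS2, hcard, show (4 : ℤ) ^ g = 2 ^ g * 2 ^ g by rw [← mul_pow]; norm_num]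
    exact (mul_self_eq_mul_self_iff.mp h).imp id (fun h => by linarith)
  · rw [sq, hS2, hcard]
end

section
/- Let V be a 2g-dimensional vector space over 𝔽₂ equipped with a nondegenerate alternating bilinear form B, and let Q be the (finite) set of all quadratic refinements of B. Then for every x ∈ V, the sum over all q ∈ Q of the product (Σ_{z∈V} (−1)^{q(z)}) · (−1)^{q(x)} equals 4^g = |V|. -/
namespace ArfAux

/-- The sign character `𝔽₂ → ℤ`. -/
def chi (t : ZMod 2) : ℤ := (-1) ^ t.val

lemma chi_add (a b : ZMod 2) : chi (a + b) = chi a * chi b := by revert a b; decide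

lemma chi_sq (a : ZMod 2) : chi a * chi a = 1 := by revert a; decide

variable {V : Type*} [AddCommGroup V] [Module (ZMod 2) V]

lemma add_self (x : V) : x + x = 0 := by
  have : (2 : ZMod 2) • x = x + x := two_smul _ x
  rw [show (2 : ZMod 2) = 0 by decide, zero_smul] at this
  exact this.symm

lemma B_symm (B : V →ₗ[ZMod 2] V →ₗ[ZMod 2] ZMod 2)
    (halt : ∀ x : V, B x x = 0) (x y : V) : B x y = B y x := by
  have h := halt (x + y)
  simp only [map_add, LinearMap.add_apply, halt] at h
  have h2 : B x y + (B x y + B y x) = B x y + 0 := by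
    rw [show B x y + B y x = 0 by linear_combination h]
  rw [← add_assoc, CharTwo.add_self_eq_zero, zero_add, add_zero] at h2
  exact h2.symm

open Finset in
lemma exists_refinement [Module.Finite (ZMod 2) V]
    (B : V →ₗ[ZMod 2] V →ₗ[ZMod 2] ZMod 2)
    (halt : ∀ x : V, B x x = 0) :
    ∃ q : V → ZMod 2, IsQuadraticRefinement B q := by
  classical
  set n := Module.finrank (ZMod 2) V with hn
  let b : Module.Basis (Fin n) (ZMod 2) V := Module.finBasis (ZMod 2) V
  set lt : Finset (Fin n × Fin n) := univ.filter (fun p : Fin n × Fin n => p.1 < p.2) with hlt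
  refine ⟨fun x => ∑ p ∈ lt, b.repr x p.1 * b.repr x p.2 * B (b p.1) (b p.2), ?_⟩
  intro x y
  have hsymm : ∀ i j : Fin n, B (b i) (b j) = B (b j) (b i) := fun i j => B_symm B halt _ _
  have hB : B x y = ∑ p : Fin n × Fin n, b.repr x p.1 * b.repr y p.2 * B (b p.1) (b p.2) := by
    conv_lhs => rw [← b.sum_repr x, ← b.sum_repr y]
    simp only [map_sum, LinearMap.sum_apply, map_smul, LinearMap.smul_apply, smul_eq_mul,
      Finset.mul_sum]
    rw [Fintype.sum_prod_type, Finset.sum_comm]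
    exact Finset.sum_congr rfl fun j _ => Finset.sum_congr rfl fun i _ => by ring
  have hsplit : B x y
      = (∑ p ∈ lt, b.repr x p.1 * b.repr y p.2 * B (b p.1) (b p.2))
        + ∑ p ∈ lt, b.repr x p.2 * b.repr y p.1 * B (b p.1) (b p.2) := by
    rw [hB]
    have h1 : ∀ p : Fin n × Fin n,
        b.repr x p.1 * b.repr y p.2 * B (b p.1) (b p.2)
        = (if p.1 < p.2 then b.repr x p.1 * b.repr y p.2 * B (b p.1) (b p.2) else 0)
          + (if p.2 < p.1 then b.repr x p.1 * b.repr y p.2 * B (b p.1) (b p.2) else 0) := by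
      intro p
      rcases lt_trichotomy p.1 p.2 with h | h | h
      · simp [h, not_lt_of_gt h]
      · simp [h, halt]
      · simp [h, not_lt_of_gt h]
    rw [Finset.sum_congr rfl fun p _ => h1 p, Finset.sum_add_distrib,
      ← Finset.sum_filter, ← Finset.sum_filter]
    congr 1
    refine Finset.sum_nbij' (fun p => Prod.swap p) (fun p => Prod.swap p) ?_ ?_
      (fun p _ => Prod.swap_swap p) (fun p _ => Prod.swap_swap p) (fun p _ => ?_)
    · intro p hp
      simp only [Finset.mem_filter, Finset.mem_univ, true_and] at hp
      simp only [hlt, Finset.mem_filter, Finset.mem_univ, true_and, Prod.fst_swap, Prod.snd_swap]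
      exact hp
    · intro p hp
      simp only [hlt, Finset.mem_filter, Finset.mem_univ, true_and] at hp
      simp only [Finset.mem_filter, Finset.mem_univ, true_and, Prod.fst_swap, Prod.snd_swap]
      exact hp
    · simp only [Prod.fst_swap, Prod.snd_swap]
      rw [hsymm p.2 p.1]
  rw [hsplit, ← Finset.sum_add_distrib, ← Finset.sum_add_distrib, ← Finset.sum_add_distrib]
  refine Finset.sum_congr rfl fun p _ => ?_
  simp only [map_add, Finsupp.add_apply]
  ring

lemma sum_chi_eq_zero [Fintype V] (B : V →ₗ[ZMod 2] V →ₗ[ZMod 2] ZMod 2)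
    (w : V) (hw : ∃ v, B v w = 1) : ∑ v : V, chi (B v w) = 0 := by
  obtain ⟨v₀, hv₀⟩ := hw
  have h : ∑ v : V, chi (B (v₀ + v) w) = ∑ v : V, chi (B v w) :=
    Fintype.sum_equiv (Equiv.addLeft v₀) _ _ (fun v => rfl)
  have h2 : ∀ v : V, chi (B (v₀ + v) w) = - chi (B v w) := by
    intro v
    rw [map_add, LinearMap.add_apply, chi_add, hv₀, show chi 1 = -1 by decide]
    ring
  rw [Finset.sum_congr rfl (fun v _ => h2 v), Finset.sum_neg_distrib] at h
  linarith

lemma dual_surjective [Fintype V]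
    (B : V →ₗ[ZMod 2] V →ₗ[ZMod 2] ZMod 2)
    (hnd : ∀ z : V, z ≠ 0 → ∃ x : V, B z x ≠ 0) :
    Function.Surjective (B : V →ₗ[ZMod 2] Module.Dual (ZMod 2) V) := by
  have : Module.Finite (ZMod 2) V := Module.Finite.of_finite
  have hinj : Function.Injective (B : V →ₗ[ZMod 2] Module.Dual (ZMod 2) V) := by
    rw [← LinearMap.ker_eq_bot, LinearMap.ker_eq_bot']
    intro m hm
    by_contra hm0
    obtain ⟨x, hx⟩ := hnd m hm0
    exact hx (by rw [hm]; rfl)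
  exact (LinearMap.injective_iff_surjective_of_finrank_eq_finrank
    Subspace.dual_finrank_eq.symm).mp hinj

lemma additive_is_linear (ℓ : V → ZMod 2) (h0 : ℓ 0 = 0)
    (hadd : ∀ x y, ℓ (x + y) = ℓ x + ℓ y) :
    ∃ L : V →ₗ[ZMod 2] ZMod 2, ∀ x, L x = ℓ x := by
  refine ⟨{ toFun := ℓ, map_add' := hadd, map_smul' := ?_ }, fun x => rfl⟩
  intro c x
  have hc : c = 0 ∨ c = 1 := by revert c; decide
  rcases hc with rfl | rfl
  · simp [h0]
  · simp

end ArfAux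

open Classical in
/-- **Lemma 2.7 of the paper** (multiplied through by `2^g`): for every `x ∈ V`,
`Σ_{q∈Q} (Σ_{z∈V} (−1)^{q(z)}) · (−1)^{q(x)} = 4^g`, where `Q` is the set of all
quadratic refinements of the nondegenerate alternating form `B`. -/
theorem arf_dual_sum {V : Type*} [AddCommGroup V] [Module (ZMod 2) V]
    [Fintype V] [DecidableEq V]
    (g : ℕ) (hdim : Module.finrank (ZMod 2) V = 2 * g)
    (B : V →ₗ[ZMod 2] V →ₗ[ZMod 2] ZMod 2)
    (halt : ∀ x : V, B x x = 0)
    (hnd : ∀ z : V, z ≠ 0 → ∃ x : V, B z x ≠ 0) :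
    ∀ x : V,
      ∑ q ∈ Finset.univ.filter (fun q : V → ZMod 2 => IsQuadraticRefinement B q),
        (∑ z : V, (-1 : ℤ) ^ (q z).val) * (-1 : ℤ) ^ (q x).val = 4 ^ g := by
  intro x
  have hfin : Module.Finite (ZMod 2) V := Module.Finite.of_finite
  obtain ⟨q₀, hq₀⟩ := ArfAux.exists_refinement B halt
  open ArfAux in
  -- the sum over refinements equals a sum over V
  have hbij : ∑ q ∈ Finset.univ.filter (fun q : V → ZMod 2 => IsQuadraticRefinement B q),
      (∑ z : V, ArfAux.chi (q z)) * ArfAux.chi (q x)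
      = ∑ v : V, (∑ z : V, ArfAux.chi (q₀ z + B v z)) * ArfAux.chi (q₀ x + B v x) := by
    refine (Finset.sum_bij (fun v _ => fun t => q₀ t + B v t) ?_ ?_ ?_ ?_).symm
    · intro v _
      simp only [Finset.mem_filter, Finset.mem_univ, true_and]
      intro a b
      show q₀ (a + b) + B v (a + b) = (q₀ a + B v a) + (q₀ b + B v b) + B a b
      rw [hq₀, map_add]
      ring
    · intro v _ w _ h
      have hBvw : ∀ t, B v t = B w t := by
        intro t
        have := congrFun h t
        exact add_left_cancel this
      have : B v = B w := LinearMap.ext hBvw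
      by_contra hne
      have hvw : v - w ≠ 0 := sub_ne_zero_of_ne hne
      obtain ⟨t, ht⟩ := hnd (v - w) hvw
      apply ht
      rw [map_sub, LinearMap.sub_apply, hBvw t, sub_self]
    · intro q hq
      simp only [Finset.mem_filter, Finset.mem_univ, true_and] at hq
      -- ℓ = q + q₀ is additive
      have hq0zero : q 0 = 0 := by
        have h := hq 0 0
        simp only [add_zero, map_zero, LinearMap.zero_apply] at h
        rw [h, CharTwo.add_self_eq_zero]
      have hq₀zero : q₀ 0 = 0 := by
        have h := hq₀ 0 0
        simp only [add_zero, map_zero, LinearMap.zero_apply] at h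
        rw [h, CharTwo.add_self_eq_zero]
      have hadd : ∀ a b : V, (fun t => q t + q₀ t) (a + b)
          = (fun t => q t + q₀ t) a + (fun t => q t + q₀ t) b := by
        intro a b
        show q (a + b) + q₀ (a + b) = (q a + q₀ a) + (q b + q₀ b)
        rw [hq, hq₀, show (q a + q b + B a b) + (q₀ a + q₀ b + B a b)
          = (q a + q₀ a) + (q b + q₀ b) + (B a b + B a b) from by ring,
          CharTwo.add_self_eq_zero, add_zero]
      obtain ⟨L, hL⟩ := ArfAux.additive_is_linear (fun t => q t + q₀ t)
        (by simp [hq0zero, hq₀zero]) hadd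
      obtain ⟨v, hv⟩ := ArfAux.dual_surjective B hnd L
      refine ⟨v, Finset.mem_univ v, ?_⟩
      funext t
      show q₀ t + B v t = q t
      rw [show (B v) t = L t from by rw [hv], hL t]
      rw [show q₀ t + (q t + q₀ t) = q t + (q₀ t + q₀ t) from by ring,
        CharTwo.add_self_eq_zero, add_zero]
    · intro v _
      rfl
  have step1 : ∀ v : V, (∑ z : V, ArfAux.chi (q₀ z + B v z)) * ArfAux.chi (q₀ x + B v x)
      = ∑ z : V, (ArfAux.chi (q₀ z) * ArfAux.chi (q₀ x)) * ArfAux.chi (B v (z + x)) := by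
    intro v
    rw [Finset.sum_mul]
    refine Finset.sum_congr rfl fun z _ => ?_
    rw [ArfAux.chi_add, ArfAux.chi_add, map_add, ArfAux.chi_add]
    ring
  have key : ∑ v : V, (∑ z : V, ArfAux.chi (q₀ z + B v z)) * ArfAux.chi (q₀ x + B v x)
      = (Fintype.card V : ℤ) := by
    rw [Finset.sum_congr rfl fun v _ => step1 v, Finset.sum_comm]
    rw [Finset.sum_eq_single x ?h1 ?h2]
    · have hx0 : x + x = 0 := ArfAux.add_self x
      simp only [hx0, map_zero, show ArfAux.chi 0 = 1 from by decide, mul_one,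
        ArfAux.chi_sq, Finset.sum_const, Finset.card_univ, smul_eq_mul]
      simp
    case h1 =>
      intro z _ hzx
      have hwz : z + x ≠ 0 := by
        intro h
        apply hzx
        have h2 : z + (x + x) = 0 + x := by rw [← add_assoc, h]
        rwa [ArfAux.add_self, add_zero, zero_add] at h2
      obtain ⟨t, ht⟩ := hnd (z + x) hwz
      have ht2 : B t (z + x) ≠ 0 := by rwa [← ArfAux.B_symm B halt]
      have ht3 : B t (z + x) = 1 := by
        revert ht2
        generalize B t (z + x) = a
        revert a; decide
      rw [← Finset.mul_sum, ArfAux.sum_chi_eq_zero B (z + x) ⟨t, ht3⟩, mul_zero]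
    case h2 => simp
  rw [show (∑ q ∈ Finset.univ.filter (fun q : V → ZMod 2 => IsQuadraticRefinement B q),
      (∑ z : V, (-1 : ℤ) ^ (q z).val) * (-1 : ℤ) ^ (q x).val)
      = ∑ q ∈ Finset.univ.filter (fun q : V → ZMod 2 => IsQuadraticRefinement B q),
      (∑ z : V, ArfAux.chi (q z)) * ArfAux.chi (q x) from rfl, hbij, key]
  have hcard : Fintype.card V = 2 ^ (2 * g) := by
    rw [Module.card_eq_pow_finrank (K := ZMod 2) (V := V), ZMod.card, hdim]
  rw [hcard]
  push_cast
  rw [pow_mul]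
  norm_num
end

section
/- Let V be a finite-dimensional vector space over 𝔽₂, let B be a nondegenerate bilinear form on V, and let q₀ be a quadratic refinement of B. Then the square matrix M, with rows and columns indexed by V and entries M(z, x) = (−1)^{q₀(x) + B(z,x)} ∈ ℚ, has nonzero determinant. -/
lemma neg_one_pow_add (a b : ZMod 2) :
    (-1:ℚ)^(a+b).val = (-1)^a.val * (-1)^b.val := by
  fin_cases a <;> fin_cases b <;> norm_num [ZMod.val, show (2:ZMod 2).val = 0 from rfl, show (1:ZMod 2).val = 1 from rfl, show (0:ZMod 2).val = 0 from rfl] <;> rfl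

lemma neg_one_pow_add_one (a : ZMod 2) :
    (-1:ℚ)^(a+1).val = -(-1)^a.val := by
  fin_cases a <;> norm_num [ZMod.val, show (2:ZMod 2).val = 0 from rfl, show (1:ZMod 2).val = 1 from rfl, show (0:ZMod 2).val = 0 from rfl] <;> rfl

/-- sum of character over V is 0 for nonzero functional -/
lemma sum_char_eq_zero {V : Type*} [AddCommGroup V] [Module (ZMod 2) V] [Fintype V]
    (f : V →ₗ[ZMod 2] ZMod 2) (x₀ : V) (hx₀ : f x₀ = 1) :
    ∑ x : V, (-1:ℚ)^(f x).val = 0 := by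
  have key : ∑ x : V, (-1:ℚ)^(f x).val = ∑ x : V, (-1:ℚ)^(f (x + x₀)).val :=
    (Fintype.sum_equiv (Equiv.addRight x₀) _ _ (fun x => rfl)).symm
  have h2 : ∀ x : V, (-1:ℚ)^(f (x + x₀)).val = -(-1:ℚ)^(f x).val := by
    intro x
    rw [map_add, hx₀, neg_one_pow_add_one]
  rw [Finset.sum_congr rfl (fun x _ => h2 x), Finset.sum_neg_distrib] at key
  linarith

lemma add_self_zmod2 {V : Type*} [AddCommGroup V] [Module (ZMod 2) V] (z : V) :
    z + z = 0 := by
  have h := two_smul (ZMod 2) z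
  rw [show (2:ZMod 2) = 0 from rfl, zero_smul] at h
  exact h.symm

theorem arf_matrix_det_ne_zero' {V : Type*} [AddCommGroup V] [Module (ZMod 2) V]
    [Fintype V] [DecidableEq V]
    (B : V →ₗ[ZMod 2] V →ₗ[ZMod 2] ZMod 2)
    (hnd : ∀ z : V, z ≠ 0 → ∃ x : V, B z x ≠ 0) (q₀ : V → ZMod 2) :
    (Matrix.of fun z x : V => (-1 : ℚ) ^ (q₀ x + B z x).val).det ≠ 0 := by
  set A : Matrix V V ℚ := Matrix.of fun z x : V => (-1:ℚ)^(B z x).val with hA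
  have hM : (Matrix.of fun z x : V => (-1 : ℚ) ^ (q₀ x + B z x).val)
      = A * Matrix.diagonal (fun x => (-1:ℚ)^(q₀ x).val) := by
    ext z x
    rw [Matrix.mul_diagonal]
    simp only [Matrix.of_apply, hA]
    rw [neg_one_pow_add, mul_comm]
  have hAAT : A * A.transpose = (Fintype.card V : ℚ) • 1 := by
    ext z w
    simp only [Matrix.mul_apply, Matrix.transpose_apply, Matrix.smul_apply,
      Matrix.one_apply, hA, Matrix.of_apply, smul_eq_mul]
    have hsum : ∀ x : V, (-1:ℚ)^(B z x).val * (-1:ℚ)^(B w x).val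
        = (-1:ℚ)^(B (z + w) x).val := by
      intro x
      rw [map_add, LinearMap.add_apply, neg_one_pow_add]
    rw [Finset.sum_congr rfl (fun x _ => hsum x)]
    by_cases hzw : z = w
    · subst hzw
      rw [if_pos rfl, mul_one, add_self_zmod2, map_zero]
      simp [Finset.card_univ]
    · rw [if_neg hzw, mul_zero]
      have hne : z + w ≠ 0 := by
        intro h
        apply hzw
        have : z = -w := by rwa [add_eq_zero_iff_eq_neg] at h
        rw [this, neg_eq_iff_add_eq_zero, add_self_zmod2]
      obtain ⟨x₀, hx₀⟩ := hnd _ hne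
      have hx₀' : B (z + w) x₀ = 1 := by
        revert hx₀
        generalize (B (z + w)) x₀ = a
        revert a
        decide
      exact sum_char_eq_zero (B (z + w)) x₀ hx₀'
  have hdetA : A.det ≠ 0 := by
    intro h
    have := congrArg Matrix.det hAAT
    rw [Matrix.det_mul, Matrix.det_transpose, h, mul_zero] at this
    rw [Matrix.smul_one_eq_diagonal, Matrix.det_diagonal, Finset.prod_const] at this
    have hc : (Fintype.card V : ℚ) ≠ 0 := Nat.cast_ne_zero.mpr Fintype.card_ne_zero
    exact pow_ne_zero _ hc this.symm
  rw [hM, Matrix.det_mul, Matrix.det_diagonal]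
  apply mul_ne_zero hdetA
  apply Finset.prod_ne_zero_iff.mpr
  intro x _
  exact pow_ne_zero _ (by norm_num)

/-- **Lemma 4.2 of the paper**: for a nondegenerate bilinear form `B` and a quadratic
refinement `q₀`, the matrix with entries `M(z,x) = (−1)^{q₀(x) + B(z,x)}` (whose rows
enumerate all quadratic refinements `q₀ + B(z,·)`) has nonzero determinant. -/
theorem arf_matrix_det_ne_zero {V : Type*} [AddCommGroup V] [Module (ZMod 2) V]
    [Fintype V] [DecidableEq V]
    (B : V →ₗ[ZMod 2] V →ₗ[ZMod 2] ZMod 2)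
    (hnd : ∀ z : V, z ≠ 0 → ∃ x : V, B z x ≠ 0)
    (q₀ : V → ZMod 2) (hq₀ : IsQuadraticRefinement B q₀) :
    (Matrix.of fun z x : V => (-1 : ℚ) ^ (q₀ x + B z x).val).det ≠ 0 :=
  arf_matrix_det_ne_zero' B hnd q₀
end

section
/- Let V be a finite-dimensional vector space over 𝔽₂ with a nondegenerate bilinear form B admitting a quadratic refinement, and let Q be the set of all quadratic refinements of B. Then the family of functions (x ↦ (−1)^{q(x)} : V → ℚ), indexed by q ∈ Q, is linearly independent over ℚ. -/
lemma zmod2_cases (a : ZMod 2) : a = 0 ∨ a = 1 := by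
  revert a; decide

lemma neg_one_pow_zmod_add (a b : ZMod 2) :
    (-1 : ℚ) ^ (a + b).val = (-1) ^ a.val * (-1) ^ b.val := by
  rcases zmod2_cases a with rfl | rfl <;> rcases zmod2_cases b with rfl | rfl <;>
    simp [ZMod.val_one, show ((1 : ZMod 2) + 1).val = 0 from rfl,
      show ((0 : ZMod 2) + 0).val = 0 from rfl, show ((0 : ZMod 2) + 1).val = 1 from rfl,
      show ((1 : ZMod 2) + 0).val = 1 from rfl]

lemma sum_sign_eq_zero {V : Type*} [AddCommGroup V] [Fintype V]
    (d : V → ZMod 2) (hadd : ∀ x y, d (x + y) = d x + d y) (hne : ∃ x, d x ≠ 0) :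
    ∑ x : V, (-1 : ℚ) ^ (d x).val = 0 := by
  obtain ⟨x0, hx0⟩ := hne
  have hx1 : d x0 = 1 := by
    generalize h : d x0 = a at hx0 ⊢
    rcases zmod2_cases a with rfl | rfl <;> simp_all
  have key : ∀ x : V, (-1 : ℚ) ^ (d (x + x0)).val = - (-1 : ℚ) ^ (d x).val := by
    intro x
    rw [hadd, hx1, neg_one_pow_zmod_add]
    norm_num [ZMod.val_one]
  have h2 : ∑ x : V, (-1 : ℚ) ^ (d (x + x0)).val = ∑ x : V, (-1 : ℚ) ^ (d x).val :=
    Fintype.sum_equiv (Equiv.addRight x0) _ _ (fun x => rfl)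
  simp only [key, Finset.sum_neg_distrib] at h2
  linarith

/-- The family of sign functions `x ↦ (−1)^{q(x)}`, indexed by the quadratic
refinements `q` of a nondegenerate bilinear form `B` (assumed to admit at least one
quadratic refinement), is linearly independent over `ℚ`. -/
theorem sign_functions_linearIndependent {V : Type*} [AddCommGroup V]
    [Module (ZMod 2) V] [Fintype V]
    (B : V →ₗ[ZMod 2] V →ₗ[ZMod 2] ZMod 2)
    (hnd : ∀ z : V, z ≠ 0 → ∃ x : V, B z x ≠ 0)
    (hex : ∃ q : V → ZMod 2, IsQuadraticRefinement B q) :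
    LinearIndependent ℚ
      (fun q : {q : V → ZMod 2 // IsQuadraticRefinement B q} =>
        (fun x : V => (-1 : ℚ) ^ ((q : V → ZMod 2) x).val)) := by
  rw [linearIndependent_iff']
  intro s g hsum q0 hq0
  have hzero : ∀ x : V,
      ∑ q ∈ s, g q * (-1 : ℚ) ^ ((q : V → ZMod 2) x).val = 0 := by
    intro x
    have := congrFun hsum x
    simpa [Finset.sum_apply] using this
  have H : ∑ q ∈ s, g q * ∑ x : V,
      (-1 : ℚ) ^ (((q : V → ZMod 2) x + (q0 : V → ZMod 2) x).val) = 0 := by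
    calc ∑ q ∈ s, g q * ∑ x : V,
          (-1 : ℚ) ^ (((q : V → ZMod 2) x + (q0 : V → ZMod 2) x).val)
        = ∑ q ∈ s, ∑ x : V, g q * (-1 : ℚ) ^ ((q : V → ZMod 2) x).val
            * (-1 : ℚ) ^ ((q0 : V → ZMod 2) x).val := by
          refine Finset.sum_congr rfl fun q _ => ?_
          rw [Finset.mul_sum]
          refine Finset.sum_congr rfl fun x _ => ?_
          rw [neg_one_pow_zmod_add]; ring
      _ = ∑ x : V, ∑ q ∈ s, g q * (-1 : ℚ) ^ ((q : V → ZMod 2) x).val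
            * (-1 : ℚ) ^ ((q0 : V → ZMod 2) x).val := Finset.sum_comm
      _ = 0 := by
          refine Finset.sum_eq_zero fun x _ => ?_
          rw [← Finset.sum_mul, hzero, zero_mul]
  have Hsingle : ∑ q ∈ s, g q * ∑ x : V,
      (-1 : ℚ) ^ (((q : V → ZMod 2) x + (q0 : V → ZMod 2) x).val)
      = g q0 * Fintype.card V := by
    rw [Finset.sum_eq_single q0]
    · congr 1
      have h0 : ∀ x : V, ((q0 : V → ZMod 2) x + (q0 : V → ZMod 2) x) = 0 := by
        intro x
        generalize (q0 : V → ZMod 2) x = a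
        fin_cases a <;> decide
      simp [h0, ZMod.val_zero]
    · intro q hq hne
      have hd : ∑ x : V,
          (-1 : ℚ) ^ (((q : V → ZMod 2) x + (q0 : V → ZMod 2) x).val) = 0 := by
        apply sum_sign_eq_zero
        · intro x y
          have h1 := q.2 x y
          have h2 := q0.2 x y
          have hB : (B x) y + (B x) y = 0 := by
            generalize (B x) y = b; fin_cases b <;> decide
          rw [h1, h2]
          linear_combination hB
        · by_contra hc
          push_neg at hc
          apply hne
          ext x
          have hx := hc x
          generalize h1 : (q : V → ZMod 2) x = a at hx ⊢
          generalize h2 : (q0 : V → ZMod 2) x = b at hx ⊢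
          rcases zmod2_cases a with rfl | rfl <;> rcases zmod2_cases b with rfl | rfl <;> simp_all
      rw [hd, mul_zero]
    · intro h; exact absurd hq0 h
  rw [Hsingle] at H
  have hcard : (0 : ℚ) < Fintype.card V := by
    exact_mod_cast Fintype.card_pos
  rcases mul_eq_zero.mp H with h | h
  · exact h
  · exact absurd h (ne_of_gt hcard)
end

section
/- Let G be a finite multigraph given by finite types V (vertices) and E (edges) with endpoint maps u, w : E → V, and let K be a field. Let x : E → K be edge weights with x(e) ≠ 0 and x(e) + x(e)⁻¹ ≠ 0 for every e ∈ E, and assume 2 ≠ 0 in K. For a spin configuration σ : V → {+1, −1} and an edge e, let x(e)^{σ(u e)·σ(w e)} denote x(e) if σ(u e) = σ(w e) and x(e)⁻¹ otherwise. Then Σ_{σ : V → {±1}} Π_{e ∈ E} x(e)^{σ(u e)·σ(w e)} = 2^{|V|} · (Π_{e ∈ E} (x(e) + x(e)⁻¹)/2) · Σ_{E′ even} Π_{e ∈ E′} (x(e) − x(e)⁻¹)/(x(e) + x(e)⁻¹), where the last sum ranges over all even subsets E′ ⊆ E. -/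
/-- A subset `E'` of the edges of a multigraph (given by endpoint maps `u w : E → V`)
is *even* if at every vertex `v` the number of edge-endpoints from `E'` lying at `v`
is even (a loop at `v` contributes `2`). -/
def IsEvenSubgraph {V E : Type*} [DecidableEq V] (u w : E → V) (E' : Finset E) : Prop :=
  ∀ v : V, Even ((E'.filter (fun e => u e = v)).card + (E'.filter (fun e => w e = v)).card)

open Finset

lemma vdw_units_univ : (Finset.univ : Finset ℤˣ) = {1, -1} := by
  ext u
  simpa using Int.units_eq_one_or u

/-- Σ_{s = ±1} s^n = 2 if n even, 0 if n odd. -/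
lemma vdw_sum_spin_pow {K : Type*} [Field K] (n : ℕ) :
    ∑ s : ℤˣ, ((s : ℤ) : K) ^ n = if Even n then 2 else 0 := by
  rw [vdw_units_univ, Finset.sum_pair (by decide : (1 : ℤˣ) ≠ -1)]
  simp only [Units.val_one, Int.cast_one, one_pow, Units.val_neg, Int.cast_neg]
  rcases Nat.even_or_odd n with h | h
  · simp [h, h.neg_one_pow, one_add_one_eq_two]
  · simp [h.neg_one_pow, Nat.not_even_iff_odd.mpr h]

/-- fiberwise regrouping of an endpoint product. -/
lemma vdw_fiber {V E : Type*} [Fintype V] [DecidableEq V] {K : Type*} [Field K]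
    (g : E → V) (σ : V → ℤˣ) (E' : Finset E) :
    ∏ e ∈ E', ((σ (g e) : ℤ) : K)
      = ∏ v : V, ((σ v : ℤ) : K) ^ (E'.filter (fun e => g e = v)).card := by
  rw [← Finset.prod_fiberwise' E' g (fun v => ((σ v : ℤ) : K))]
  exact Finset.prod_congr rfl fun v _ => (Finset.prod_const _)

lemma vdw_spin_prod {K : Type*} [Field K] (a b : ℤˣ) :
    ((a : ℤ) : K) * ((b : ℤ) : K) = if a = b then 1 else -1 := by
  rcases Int.units_eq_one_or a with rfl | rfl <;>
    rcases Int.units_eq_one_or b with rfl | rfl <;> norm_num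

lemma vdw_swap {V : Type*} [Fintype V] [DecidableEq V] {K : Type*} [CommSemiring K]
    (g : V → ℤˣ → K) : ∑ σ : V → ℤˣ, ∏ v, g v (σ v) = ∏ v, ∑ s : ℤˣ, g v s :=
  (Fintype.prod_sum g).symm

open Classical in
/-- **Van der Waerden's theorem**: the Ising partition function
`Z_G(x) = Σ_σ Π_e x(e)^{σ(u e)·σ(w e)}` of a finite multigraph equals
`2^{|V|} · Π_e (x(e)+x(e)⁻¹)/2 · 𝓔_G(z)` where `𝓔_G` is the generating polynomial of
even subgraphs evaluated at `z(e) = (x(e)−x(e)⁻¹)/(x(e)+x(e)⁻¹)`. Spins are elements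
of `ℤˣ = {±1}`, and `x(e)^{σ(u e)·σ(w e)}` is `x e` if the endpoint spins agree and
`(x e)⁻¹` otherwise. -/
theorem van_der_Waerden {V E : Type*} [Fintype V] [Fintype E] [DecidableEq V]
    (u w : E → V)
    {K : Type*} [Field K] (h2 : (2 : K) ≠ 0)
    (x : E → K) (hx : ∀ e : E, x e ≠ 0) (hx' : ∀ e : E, x e + (x e)⁻¹ ≠ 0) :
    ∑ σ : V → ℤˣ, ∏ e : E, (if σ (u e) = σ (w e) then x e else (x e)⁻¹)
      = 2 ^ (Fintype.card V) * (∏ e : E, (x e + (x e)⁻¹) / 2) *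
        ∑ E' ∈ Finset.univ.filter (fun E' : Finset E => IsEvenSubgraph u w E'),
          ∏ e ∈ E', (x e - (x e)⁻¹) / (x e + (x e)⁻¹) := by
  set c : E → K := fun e => (x e + (x e)⁻¹) / 2 with hc
  set z : E → K := fun e => (x e - (x e)⁻¹) / (x e + (x e)⁻¹) with hz
  -- per-edge identity
  have key : ∀ (σ : V → ℤˣ) (e : E),
      (if σ (u e) = σ (w e) then x e else (x e)⁻¹)
        = c e * (1 + z e * (((σ (u e) : ℤ) : K) * ((σ (w e) : ℤ) : K))) := by
    intro σ e
    have hxe := hx e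
    have hxe' := hx' e
    have h1 : (1 : K) + x e ^ 2 ≠ 0 := by
      have hh : x e * (x e + (x e)⁻¹) = 1 + x e ^ 2 := by
        field_simp
        ring
      rw [← hh]
      exact mul_ne_zero hxe hxe'
    have hkey : (x e + (x e)⁻¹) * ((x e - (x e)⁻¹) / (x e + (x e)⁻¹)) = x e - (x e)⁻¹ :=
      mul_div_cancel₀ _ hxe'
    rw [vdw_spin_prod]
    by_cases h : σ (u e) = σ (w e)
    · rw [if_pos h, if_pos h]
      simp only [hc, hz]
      rw [div_mul_eq_mul_div, mul_add, mul_one, mul_one, hkey, eq_div_iff h2]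
      ring
    · rw [if_neg h, if_neg h]
      simp only [hc, hz]
      rw [mul_neg_one, div_mul_eq_mul_div, mul_add, mul_one, mul_neg, hkey, eq_div_iff h2]
      ring
  -- rewrite each summand and expand the product
  have expand : ∀ σ : V → ℤˣ,
      ∏ e : E, (if σ (u e) = σ (w e) then x e else (x e)⁻¹)
        = (∏ e : E, c e) *
          ∑ E' : Finset E, ∏ e ∈ E', z e * (((σ (u e) : ℤ) : K) * ((σ (w e) : ℤ) : K)) := by
    intro σ
    calc ∏ e : E, (if σ (u e) = σ (w e) then x e else (x e)⁻¹)
        = ∏ e : E, c e * (1 + z e * (((σ (u e) : ℤ) : K) * ((σ (w e) : ℤ) : K))) :=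
          Finset.prod_congr rfl fun e _ => key σ e
      _ = (∏ e : E, c e) *
            ∏ e : E, ((z e * (((σ (u e) : ℤ) : K) * ((σ (w e) : ℤ) : K))) + 1) := by
          rw [← Finset.prod_mul_distrib]
          exact Finset.prod_congr rfl fun e _ => by ring
      _ = _ := by
          rw [Fintype.prod_add]
          congr 1
          exact Finset.sum_congr rfl fun E' _ => by simp
  -- the inner spin sum for a fixed subset
  have inner : ∀ E' : Finset E,
      (∑ σ : V → ℤˣ, ∏ e ∈ E', (((σ (u e) : ℤ) : K) * ((σ (w e) : ℤ) : K)))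
        = if IsEvenSubgraph u w E' then 2 ^ (Fintype.card V) else 0 := by
    intro E'
    have step : ∀ σ : V → ℤˣ,
        ∏ e ∈ E', (((σ (u e) : ℤ) : K) * ((σ (w e) : ℤ) : K))
          = ∏ v : V, ((σ v : ℤ) : K) ^
              ((E'.filter (fun e => u e = v)).card + (E'.filter (fun e => w e = v)).card) := by
      intro σ
      rw [Finset.prod_mul_distrib, vdw_fiber u σ E', vdw_fiber w σ E',
        ← Finset.prod_mul_distrib]
      exact Finset.prod_congr rfl fun v _ => (pow_add _ _ _).symm
    calc (∑ σ : V → ℤˣ, ∏ e ∈ E', (((σ (u e) : ℤ) : K) * ((σ (w e) : ℤ) : K)))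
        = ∑ σ : V → ℤˣ, ∏ v : V, ((σ v : ℤ) : K) ^
            ((E'.filter (fun e => u e = v)).card + (E'.filter (fun e => w e = v)).card) :=
          Finset.sum_congr rfl fun σ _ => step σ
      _ = ∏ v : V, ∑ s : ℤˣ, ((s : ℤ) : K) ^
            ((E'.filter (fun e => u e = v)).card + (E'.filter (fun e => w e = v)).card) :=
          vdw_swap (fun v s => ((s : ℤ) : K) ^
            ((E'.filter (fun e => u e = v)).card + (E'.filter (fun e => w e = v)).card))
      _ = ∏ v : V, (if Even ((E'.filter (fun e => u e = v)).card
            + (E'.filter (fun e => w e = v)).card) then (2 : K) else 0) :=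
          Finset.prod_congr rfl fun v _ => vdw_sum_spin_pow _
      _ = if IsEvenSubgraph u w E' then 2 ^ (Fintype.card V) else 0 := by
          by_cases h : IsEvenSubgraph u w E'
          · rw [if_pos h]
            rw [Finset.prod_congr rfl fun v _ => if_pos (h v)]
            rw [Finset.prod_const, Finset.card_univ]
          · rw [if_neg h]
            obtain ⟨v, hv⟩ := not_forall.mp h
            exact Finset.prod_eq_zero (Finset.mem_univ v) (if_neg hv)
  calc ∑ σ : V → ℤˣ, ∏ e : E, (if σ (u e) = σ (w e) then x e else (x e)⁻¹)
      = ∑ σ : V → ℤˣ, (∏ e : E, c e) *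
          ∑ E' : Finset E, ∏ e ∈ E', z e * (((σ (u e) : ℤ) : K) * ((σ (w e) : ℤ) : K)) :=
        Finset.sum_congr rfl fun σ _ => expand σ
    _ = (∏ e : E, c e) * ∑ E' : Finset E, (∏ e ∈ E', z e) *
          ∑ σ : V → ℤˣ, ∏ e ∈ E', (((σ (u e) : ℤ) : K) * ((σ (w e) : ℤ) : K)) := by
        rw [← Finset.mul_sum, Finset.sum_comm]
        congr 1
        refine Finset.sum_congr rfl fun E' _ => ?_
        rw [Finset.mul_sum]
        exact Finset.sum_congr rfl fun σ _ => by rw [Finset.prod_mul_distrib]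
    _ = (∏ e : E, c e) * ∑ E' : Finset E, (∏ e ∈ E', z e) *
          (if IsEvenSubgraph u w E' then 2 ^ (Fintype.card V) else 0) := by
        congr 1
        exact Finset.sum_congr rfl fun E' _ => by rw [inner E']
    _ = 2 ^ (Fintype.card V) * (∏ e : E, c e) *
          ∑ E' ∈ Finset.univ.filter (fun E' : Finset E => IsEvenSubgraph u w E'),
            ∏ e ∈ E', z e := by
        rw [Finset.sum_filter]
        rw [Finset.mul_sum, Finset.mul_sum]
        refine Finset.sum_congr rfl fun E' _ => ?_
        by_cases h : IsEvenSubgraph u w E' <;> simp [h] <;> ring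
end
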